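/- Let M ⊂ B(H) be a von Neumann algebra and S a deterministic quantum supermap from CB(M,B(H)) to CB(N,B(K)). Then for all operators E, F, A ∈ B(H), [S(E ⊙_M AF)](I_N) = [S(EA ⊙_M F)](I_N), where (E ⊙_M F)(X) = EXF for X ∈ M. -/

import Mathlib

/-!
For a channel-preserving supermap `S`, the operator `[S(Φ)](1)` depends only on `Φ(1)`; since
`(E ⊙ AF)(1) = EAF = (EA ⊙ F)(1)`, the theorem follows.

As `CB(M, B(H))` is spanned by normal CP maps, it is enough to compare a normal CP map `Φ` with
the measure-and-prepare map `ω(Φ(1))`, where `ω(B)(a) = ⟪e, a e⟫ • B` for a fixed unit vector `e`.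
For `0 ≤ r ≤ 1 / ‖Φ(1)‖` the map `r • Φ + ω(1 - r • Φ(1))` is a channel, so `S` sends it to a
channel and `r • ([S(Φ)](1) - [S(ω(Φ(1)))](1)) + [S(ω(1))](1) = 1` for all such `r`; comparing
`r = 0` with some `r > 0` gives `[S(Φ)](1) = [S(ω(Φ(1)))](1)`.
-/

open scoped ComplexOrder InnerProductSpace
open Filter Topology ContinuousLinearMap

set_option synthInstance.maxHeartbeats 1000000
set_option maxHeartbeats 1000000

noncomputable section

namespace QSM

noncomputable instance piLpComplete (ι : Type*) (E : Type*) [NormedAddCommGroup E]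
    [CompleteSpace E] : CompleteSpace (PiLp 2 fun _ : ι => E) :=
  inferInstance

variable {H K : Type*}
  [NormedAddCommGroup H] [InnerProductSpace ℂ H] [CompleteSpace H]
  [NormedAddCommGroup K] [InnerProductSpace ℂ K] [CompleteSpace K]

/-- Sequential/net convergence in the weak operator topology. -/
def WOTto {E F : Type*} [NormedAddCommGroup E] [InnerProductSpace ℂ E]
    [NormedAddCommGroup F] [InnerProductSpace ℂ F]
    {ι : Type*} [Preorder ι] (T : ι → (E →L[ℂ] F)) (T' : E →L[ℂ] F) : Prop :=
  ∀ x y, Tendsto (fun n => ⟪x, T n y⟫_ℂ) atTop (𝓝 ⟪x, T' y⟫_ℂ)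

section MatOp

variable {ι : Type*} [Fintype ι] [DecidableEq ι]
variable {E F : Type*} [NormedAddCommGroup E] [InnerProductSpace ℂ E]
  [NormedAddCommGroup F] [InnerProductSpace ℂ F]

/-- The `j`-th coordinate projection on the Hilbert space direct sum. -/
def projCLM (E : Type*) [NormedAddCommGroup E] [InnerProductSpace ℂ E] (j : ι) :
    (PiLp 2 fun _ : ι => E) →L[ℂ] E :=
  (ContinuousLinearMap.proj j).comp (PiLp.continuousLinearEquiv 2 ℂ _).toContinuousLinearMap

/-- The `i`-th coordinate inclusion into the Hilbert space direct sum. -/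
def inclCLM (E : Type*) [NormedAddCommGroup E] [InnerProductSpace ℂ E] (i : ι) :
    E →L[ℂ] (PiLp 2 fun _ : ι => E) :=
  ((PiLp.continuousLinearEquiv 2 ℂ _).symm.toContinuousLinearMap).comp
    (ContinuousLinearMap.pi fun j => if j = i then ContinuousLinearMap.id ℂ E else 0)

/-- The operator on the `n`-fold Hilbert space direct sum determined by a matrix of operators.
This realizes the identification `Mₙ(B(E)) = B(Eⁿ)` used for amplifications. -/
def matOp (T : ι → ι → (E →L[ℂ] F)) : (PiLp 2 fun _ : ι => E) →L[ℂ] (PiLp 2 fun _ : ι => F) :=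
  ∑ i, ∑ j, (inclCLM F i).comp ((T i j).comp (projCLM E j))

end MatOp

variable (S : StarSubalgebra ℂ (H →L[ℂ] H))

/-- A linear map `Φ : S → B(K)` is completely positive if all of its amplifications
map positive matrices over `S` to positive operators. -/
def IsCPMap (Φ : S →ₗ[ℂ] (K →L[ℂ] K)) : Prop :=
  ∀ (n : ℕ) (a : Matrix (Fin n) (Fin n) S),
    (matOp fun i j => (a i j : H →L[ℂ] H)).IsPositive →
    (matOp fun i j => Φ (a i j)).IsPositive

/-- A linear map `Φ : S → B(K)` is completely bounded with complete bound `C` if all of its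
amplifications have norm at most `C` times the norm of the input matrix. -/
def IsCBMap (Φ : S →ₗ[ℂ] (K →L[ℂ] K)) (C : ℝ) : Prop :=
  ∀ (n : ℕ) (a : Matrix (Fin n) (Fin n) S),
    ‖matOp fun i j => Φ (a i j)‖ ≤ C * ‖matOp fun i j => (a i j : H →L[ℂ] H)‖

/-- Weak*-continuity (equivalently, for positive maps, normality) of a map `Φ : S → B(K)`:
`Φ` maps bounded weak-operator convergent sequences to weak-operator convergent sequences.
(On bounded sets of `B(H)`, `H` separable, the weak* topology coincides with the weak operator
topology and is metrizable, so sequences suffice.) -/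
def WStarCont (Φ : S →ₗ[ℂ] (K →L[ℂ] K)) : Prop :=
  ∀ (A : ℕ → S) (A' : S) (c : ℝ),
    (∀ n, ‖(A n : H →L[ℂ] H)‖ ≤ c) →
    WOTto (fun n => (A n : H →L[ℂ] H)) (A' : H →L[ℂ] H) →
    WOTto (fun n => Φ (A n)) (Φ A')

/-- A normal completely positive map. -/
def NormalCP (Φ : S →ₗ[ℂ] (K →L[ℂ] K)) : Prop :=
  IsCPMap S Φ ∧ WStarCont S Φ

/-- The cone ordering on maps: `Φ ⪯ Ψ` iff `Ψ - Φ` is a normal CP map. -/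
def CPle (Φ Ψ : S →ₗ[ℂ] (K →L[ℂ] K)) : Prop := NormalCP S (Ψ - Φ)

/-- A quantum channel into the von Neumann algebra `N`: a unital normal CP map with range in
`N`. -/
def IsChannel (N : VonNeumannAlgebra K) (Φ : S →ₗ[ℂ] (K →L[ℂ] K)) : Prop :=
  NormalCP S Φ ∧ (∀ X, Φ X ∈ N) ∧ Φ 1 = 1

/-- The elementary map `E ⊙ F : S → B(K)`, `A ↦ E A F`, for `E ∈ B(H,K)`, `F ∈ B(K,H)`. -/
def sandwichMap (L : H →L[ℂ] K) (R : K →L[ℂ] H) : S →ₗ[ℂ] (K →L[ℂ] K) where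
  toFun A := L ∘L ((A : H →L[ℂ] H) ∘L R)
  map_add' a b := by simp [add_comp, comp_add]
  map_smul' c a := by simp [smul_comp, comp_smulₛₗ]


/-- `B(H)` itself, regarded as a von Neumann algebra on `H`. -/
def topVN (H : Type*) [NormedAddCommGroup H] [InnerProductSpace ℂ H] [CompleteSpace H] :
    VonNeumannAlgebra H where
  toStarSubalgebra := ⊤
  centralizer_centralizer' := by
    show Set.centralizer (Set.centralizer ((⊤ : StarSubalgebra ℂ (H →L[ℂ] H)) : Set (H →L[ℂ] H)))
      = ((⊤ : StarSubalgebra ℂ (H →L[ℂ] H)) : Set (H →L[ℂ] H))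
    ext x
    simp only [Set.mem_centralizer_iff]
    constructor
    · intro _; simp
    · intro _ g hg
      exact (hg x (by simp)).symm

/-- The inclusion map `M ↪ B(H)` as a linear map. -/
def inclusionMap (M : VonNeumannAlgebra H) : M.toStarSubalgebra →ₗ[ℂ] (H →L[ℂ] H) where
  toFun A := (A : H →L[ℂ] H)
  map_add' _ _ := rfl
  map_smul' _ _ := rfl

theorem mem_topVN_sa {H : Type*} [NormedAddCommGroup H] [InnerProductSpace ℂ H]
    [CompleteSpace H] (a : H →L[ℂ] H) : a ∈ (topVN H).toStarSubalgebra := by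
  show a ∈ (⊤ : StarSubalgebra ℂ (H →L[ℂ] H))
  exact StarSubalgebra.mem_top

/-- The linear space of weak*-continuous completely bounded maps from `M` to `B(K)` with
values in `N`, realized (via the equality `CB = span CP` proved in the paper) as the linear
span of the normal completely positive maps from `M` into `N`. -/
def CBsp (M : VonNeumannAlgebra H) (N : VonNeumannAlgebra K) :
    Submodule ℂ (M.toStarSubalgebra →ₗ[ℂ] (K →L[ℂ] K)) :=
  Submodule.span ℂ {Φ | NormalCP M.toStarSubalgebra Φ ∧ ∀ X, Φ X ∈ N}

/-- `Eₙ ⇑ E` : the sequence `Eₙ` of normal CP maps is CP-increasing, CP-bounded by the normal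
CP map `E`, and converges pointwise to `E` in the weak operator topology (so that `E` is its
least upper bound). -/
def CPUp (E : ℕ → (S →ₗ[ℂ] (K →L[ℂ] K))) (E' : S →ₗ[ℂ] (K →L[ℂ] K)) : Prop :=
  (∀ n, NormalCP S (E n)) ∧ NormalCP S E' ∧
  (∀ n m, n ≤ m → CPle S (E n) (E m)) ∧ (∀ n, CPle S (E n) E') ∧
  ∀ X, WOTto (fun n => E n X) (E' X)

section Supermap

variable {H₁ K₁ H₂ K₂ : Type*}
  [NormedAddCommGroup H₁] [InnerProductSpace ℂ H₁] [CompleteSpace H₁]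
  [NormedAddCommGroup K₁] [InnerProductSpace ℂ K₁] [CompleteSpace K₁]
  [NormedAddCommGroup H₂] [InnerProductSpace ℂ H₂] [CompleteSpace H₂]
  [NormedAddCommGroup K₂] [InnerProductSpace ℂ K₂] [CompleteSpace K₂]
  {M₁ : VonNeumannAlgebra H₁} {N₁ : VonNeumannAlgebra K₁}
  {M₂ : VonNeumannAlgebra H₂} {N₂ : VonNeumannAlgebra K₂}

/-- Complete positivity of a supermap `Sm : CB(M₁,N₁) → CB(M₂,N₂)`: for every `n`, the
amplification `Iₙ ⊗ Sm` is positive.  Here a map `CB(M₁⁽ⁿ⁾,N₁⁽ⁿ⁾)` is encoded by its components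
`t k l i j ∈ CB(M₁,N₁)` under the identification `CB(M₁⁽ⁿ⁾,N₁⁽ⁿ⁾) = CB(Mₙ(ℂ),Mₙ(ℂ)) ⊗ CB(M₁,N₁)`,
and positivity of a map of matrix algebras means that it sends positive matrices (viewed as
operators on the direct sum via `matOp`) to positive matrices. -/
def SupCP (Sm : CBsp M₁ N₁ →ₗ[ℂ] CBsp M₂ N₂) : Prop :=
  ∀ (n : ℕ) (t : Fin n → Fin n → Fin n → Fin n → CBsp M₁ N₁),
    (∀ A : Matrix (Fin n) (Fin n) M₁.toStarSubalgebra,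
      (matOp fun i j => (A i j : H₁ →L[ℂ] H₁)).IsPositive →
      (matOp fun k l => ∑ i, ∑ j,
        ((t k l i j : M₁.toStarSubalgebra →ₗ[ℂ] (K₁ →L[ℂ] K₁)) (A i j))).IsPositive) →
    ∀ B : Matrix (Fin n) (Fin n) M₂.toStarSubalgebra,
      (matOp fun i j => (B i j : H₂ →L[ℂ] H₂)).IsPositive →
      (matOp fun k l => ∑ i, ∑ j,
        ((Sm (t k l i j) : M₂.toStarSubalgebra →ₗ[ℂ] (K₂ →L[ℂ] K₂)) (B i j))).IsPositive

/-- Normality of a supermap: `Sm` preserves least upper bounds of CP-increasing CP-bounded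
sequences. -/
def SupNormal (Sm : CBsp M₁ N₁ →ₗ[ℂ] CBsp M₂ N₂) : Prop :=
  ∀ (E : ℕ → CBsp M₁ N₁) (E' : CBsp M₁ N₁),
    CPUp M₁.toStarSubalgebra (fun n => (E n : M₁.toStarSubalgebra →ₗ[ℂ] (K₁ →L[ℂ] K₁)))
      (E' : M₁.toStarSubalgebra →ₗ[ℂ] (K₁ →L[ℂ] K₁)) →
    CPUp M₂.toStarSubalgebra (fun n => (Sm (E n) : M₂.toStarSubalgebra →ₗ[ℂ] (K₂ →L[ℂ] K₂)))
      (Sm E' : M₂.toStarSubalgebra →ₗ[ℂ] (K₂ →L[ℂ] K₂))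

/-- A quantum supermap: a linear, completely positive, normal map between spaces of
weak*-continuous completely bounded maps. -/
def IsSupermap (Sm : CBsp M₁ N₁ →ₗ[ℂ] CBsp M₂ N₂) : Prop :=
  SupCP Sm ∧ SupNormal Sm

/-- A deterministic quantum supermap: a quantum supermap mapping quantum channels to quantum
channels. -/
def IsDetSupermap (Sm : CBsp M₁ N₁ →ₗ[ℂ] CBsp M₂ N₂) : Prop :=
  IsSupermap Sm ∧
  ∀ E : CBsp M₁ N₁,
    IsChannel M₁.toStarSubalgebra N₁ (E : M₁.toStarSubalgebra →ₗ[ℂ] (K₁ →L[ℂ] K₁)) →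
    IsChannel M₂.toStarSubalgebra N₂ (Sm E : M₂.toStarSubalgebra →ₗ[ℂ] (K₂ →L[ℂ] K₂))

end Supermap

/-- The Loewner order on bounded operators. -/
def opLE {E : Type*} [NormedAddCommGroup E] [InnerProductSpace ℂ E] [CompleteSpace E]
    (a b : E →L[ℂ] E) : Prop := (b - a).IsPositive

/-- Least upper bounds for the Loewner order. -/
def opIsLUB {E : Type*} [NormedAddCommGroup E] [InnerProductSpace ℂ E] [CompleteSpace E]
    (s : Set (E →L[ℂ] E)) (a : E →L[ℂ] E) : Prop :=
  (∀ b ∈ s, opLE b a) ∧ ∀ c, (∀ b ∈ s, opLE b c) → opLE a c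

section Tensor

/-- A realization of the Hilbert space tensor product `H₁ ⊗ H₂` : a Hilbert space `G` together
with a bilinear map `t : H₁ × H₂ → G` with total range and satisfying the characteristic
inner product identity. -/
structure TensorStruct (H₁ H₂ G : Type*) [NormedAddCommGroup H₁] [InnerProductSpace ℂ H₁]
    [NormedAddCommGroup H₂] [InnerProductSpace ℂ H₂]
    [NormedAddCommGroup G] [InnerProductSpace ℂ G] : Type _ where
  t : H₁ →ₗ[ℂ] H₂ →ₗ[ℂ] G
  inner_t : ∀ x y v w, ⟪t x v, t y w⟫_ℂ = ⟪x, y⟫_ℂ * ⟪v, w⟫_ℂ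
  dense_t : Dense (↑(Submodule.span ℂ {g | ∃ x v, g = t x v}) : Set G)

variable {H₁ H₂ G : Type*}
  [NormedAddCommGroup H₁] [InnerProductSpace ℂ H₁] [CompleteSpace H₁]
  [NormedAddCommGroup H₂] [InnerProductSpace ℂ H₂] [CompleteSpace H₂]
  [NormedAddCommGroup G] [InnerProductSpace ℂ G] [CompleteSpace G]

/-- The set of elementary tensors `a ⊗ b`, `a ∈ M`, `b ∈ N`, inside `B(H₁ ⊗ H₂)`. -/
def elemT (τ : TensorStruct H₁ H₂ G) (M : VonNeumannAlgebra H₁) (N : VonNeumannAlgebra H₂) :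
    Set (G →L[ℂ] G) :=
  {c | ∃ a ∈ M, ∃ b ∈ N, ∀ x v, c (τ.t x v) = τ.t (a x) (b v)}

/-- The von Neumann algebra tensor product `M ⊗̄ N`, realized as the double commutant of the
set of elementary tensors. -/
def vnT (τ : TensorStruct H₁ H₂ G) (M : VonNeumannAlgebra H₁) (N : VonNeumannAlgebra H₂) :
    VonNeumannAlgebra G where
  toStarSubalgebra := StarSubalgebra.centralizer ℂ
    ((StarSubalgebra.centralizer ℂ (elemT τ M N) :
        StarSubalgebra ℂ (G →L[ℂ] G)) : Set (G →L[ℂ] G))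
  centralizer_centralizer' := by
    show Set.centralizer (Set.centralizer ((StarSubalgebra.centralizer ℂ
        ((StarSubalgebra.centralizer ℂ (elemT τ M N) :
          StarSubalgebra ℂ (G →L[ℂ] G)) : Set (G →L[ℂ] G))) : Set (G →L[ℂ] G)))
      = ((StarSubalgebra.centralizer ℂ
        ((StarSubalgebra.centralizer ℂ (elemT τ M N) :
          StarSubalgebra ℂ (G →L[ℂ] G)) : Set (G →L[ℂ] G))) : Set (G →L[ℂ] G))
    rw [StarSubalgebra.coe_centralizer_centralizer]
    exact Set.centralizer_centralizer_centralizer _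

end Tensor

section Amp

variable {H₁ K₁ H₂ K₂ V G G' : Type*}
  [NormedAddCommGroup H₁] [InnerProductSpace ℂ H₁] [CompleteSpace H₁]
  [NormedAddCommGroup K₁] [InnerProductSpace ℂ K₁] [CompleteSpace K₁]
  [NormedAddCommGroup H₂] [InnerProductSpace ℂ H₂] [CompleteSpace H₂]
  [NormedAddCommGroup K₂] [InnerProductSpace ℂ K₂] [CompleteSpace K₂]
  [NormedAddCommGroup V] [InnerProductSpace ℂ V] [CompleteSpace V]
  [NormedAddCommGroup G] [InnerProductSpace ℂ G] [CompleteSpace G]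
  [NormedAddCommGroup G'] [InnerProductSpace ℂ G'] [CompleteSpace G']

/-- `Ē` is the amplification `E ⊗ id_{B(V)} : M ⊗̄ B(V) → B(K₁ ⊗ V)` of the
weak*-continuous completely bounded map `E : M → B(K₁)` : it is weak*-continuous and acts in
the expected way on elementary tensors. -/
def IsAmp (M : VonNeumannAlgebra H₁) (τ : TensorStruct H₁ V G) (κ : TensorStruct K₁ V G')
    (E : M.toStarSubalgebra →ₗ[ℂ] (K₁ →L[ℂ] K₁))
    (Ebar : (vnT τ M (topVN V)).toStarSubalgebra →ₗ[ℂ] (G' →L[ℂ] G')) : Prop :=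
  WStarCont (vnT τ M (topVN V)).toStarSubalgebra Ebar ∧
  ∀ (c : (vnT τ M (topVN V)).toStarSubalgebra) (a : H₁ →L[ℂ] H₁) (ha : a ∈ M) (b : V →L[ℂ] V),
    (∀ x v, (c : G →L[ℂ] G) (τ.t x v) = τ.t (a x) (b v)) →
    ∀ x v, (Ebar c) (κ.t x v) = κ.t ((E ⟨a, ha⟩) x) (b v)

/-- The triple `(V, W, F)` (presented through concrete realizations `τ`, `κ` of the Hilbert
tensor products `H₁ ⊗ V` and `K₁ ⊗ V`) is a dilation of the supermap `Sm`, i.e.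
`[Sm(E)](A) = W* [(E ⊗ id_V)(F(A))] W` for all `E ∈ CB(M₁, B(K₁))` and `A ∈ M₂`. -/
def DilatesTo (M₁ : VonNeumannAlgebra H₁) (M₂ : VonNeumannAlgebra H₂)
    (τ : TensorStruct H₁ V G) (κ : TensorStruct K₁ V G') (W : K₂ →L[ℂ] G')
    (F : M₂.toStarSubalgebra →ₗ[ℂ] (G →L[ℂ] G)) (hF : ∀ X, F X ∈ vnT τ M₁ (topVN V))
    (Sm : CBsp M₁ (topVN K₁) →ₗ[ℂ] CBsp M₂ (topVN K₂)) : Prop :=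
  ∀ E : CBsp M₁ (topVN K₁),
    ∃ Ebar, IsAmp M₁ τ κ (E : M₁.toStarSubalgebra →ₗ[ℂ] (K₁ →L[ℂ] K₁)) Ebar ∧
      ∀ A, (Sm E : M₂.toStarSubalgebra →ₗ[ℂ] (K₂ →L[ℂ] K₂)) A
        = (ContinuousLinearMap.adjoint W) ∘L ((Ebar ⟨F A, hF A⟩) ∘L W)

/-- Minimality of a dilation: `V = span closure of {(u* ⊗ I_V) W v | u ∈ K₁, v ∈ K₂}`. -/
def MinimalDil (κ : TensorStruct K₁ V G') (W : K₂ →L[ℂ] G') : Prop :=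
  Dense (↑(Submodule.span ℂ {w : V | ∃ (u : K₁) (v : K₂) (ℓ : G' →L[ℂ] V),
    (∀ k z, ℓ (κ.t k z) = ⟪u, k⟫_ℂ • z) ∧ w = ℓ (W v)}) : Set V)

end Amp

/-- A bundled separable complex Hilbert space. -/
structure HilbertSpaceStruct : Type 1 where
  carrier : Type
  [grp : NormedAddCommGroup carrier]
  [ipc : InnerProductSpace ℂ carrier]
  [cpl : CompleteSpace carrier]
  [sep : TopologicalSpace.SeparableSpace carrier]

attribute [instance] HilbertSpaceStruct.grp HilbertSpaceStruct.ipc HilbertSpaceStruct.cpl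
  HilbertSpaceStruct.sep

section MatOp

variable {ι : Type*} [Fintype ι] [DecidableEq ι]
  {E F : Type*} [NormedAddCommGroup E] [InnerProductSpace ℂ E]
  [NormedAddCommGroup F] [InnerProductSpace ℂ F]

lemma matOp_apply (T : ι → ι → (E →L[ℂ] F)) (x : PiLp 2 fun _ : ι => E) (k : ι) :
    matOp T x k = ∑ j, T k j (x j) := by
  simp [matOp, inclCLM, projCLM, Finset.sum_apply, DFunLike.ite_apply]

lemma inner_matOp (T : ι → ι → (E →L[ℂ] F)) (ξ : PiLp 2 fun _ : ι => F)
    (x : PiLp 2 fun _ : ι => E) :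
    ⟪ξ, matOp T x⟫_ℂ = ∑ k, ∑ j, ⟪ξ k, T k j (x j)⟫_ℂ := by
  simp only [PiLp.inner_apply, matOp_apply, inner_sum]

lemma matOp_add (T T' : ι → ι → (E →L[ℂ] F)) :
    matOp (fun i j => T i j + T' i j) = matOp T + matOp T' := by
  simp only [matOp, add_comp, comp_add, Finset.sum_add_distrib]

lemma matOp_smul (c : ℂ) (T : ι → ι → (E →L[ℂ] F)) :
    matOp (fun i j => c • T i j) = c • matOp T := by
  simp only [matOp, smul_comp, comp_smul, Finset.smul_sum]

end MatOp

lemma _root_.LinearMap.isPositive_iff_forall_inner_nonneg {E : Type*} [NormedAddCommGroup E]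
    [InnerProductSpace ℂ E] (T : E →ₗ[ℂ] E) : T.IsPositive ↔ ∀ x, 0 ≤ ⟪x, T x⟫_ℂ := by
  refine (LinearMap.isPositive_iff_complex T).trans (forall_congr' fun x => ?_)
  rw [Complex.nonneg_iff, ← inner_conj_symm x (T x), Complex.conj_re, Complex.conj_im,
    Complex.ext_iff]
  simp only [RCLike.re_to_complex, Complex.ofReal_re, Complex.ofReal_im, true_and, zero_eq_neg,
    and_comm, eq_comm]

lemma _root_.ContinuousLinearMap.isPositive_iff_forall_inner_nonneg {E : Type*}
    [NormedAddCommGroup E] [InnerProductSpace ℂ E] (T : E →L[ℂ] E) :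
    T.IsPositive ↔ ∀ x, 0 ≤ ⟪x, T x⟫_ℂ :=
  (isPositive_toLinearMap_iff T).symm.trans (LinearMap.isPositive_iff_forall_inner_nonneg _)

open Matrix in
lemma _root_.Matrix.posSemidef_of_forall_dotProduct_mulVec_nonneg {n : Type*} [Fintype n]
    {A : Matrix n n ℂ} (hA : ∀ x, 0 ≤ star x ⬝ᵥ (A *ᵥ x)) : A.PosSemidef := by
  classical
  rw [← Matrix.isPositive_toEuclideanLin_iff, LinearMap.isPositive_iff_forall_inner_nonneg]
  intro x
  simpa [EuclideanSpace.inner_eq_star_dotProduct, dotProduct_comm] using hA x.ofLp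

open Matrix in
lemma posSemidef_inner_matOp {ι : Type*} [Fintype ι] [DecidableEq ι] {E : Type*}
    [NormedAddCommGroup E] [InnerProductSpace ℂ E] {T : ι → ι → (E →L[ℂ] E)}
    (hT : (matOp T).IsPositive) (x : ι → E) :
    (Matrix.of fun i j => ⟪x i, T i j (x j)⟫_ℂ).PosSemidef := by
  refine Matrix.posSemidef_of_forall_dotProduct_mulVec_nonneg fun c => ?_
  convert (isPositive_iff_forall_inner_nonneg _).mp hT (WithLp.toLp 2 fun i => c i • x i) using 1
  simp only [inner_matOp, dotProduct, mulVec, Finset.mul_sum, map_smul,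
    inner_smul_left, inner_smul_right, Pi.star_apply, RCLike.star_def, Matrix.of_apply]
  exact Finset.sum_congr rfl fun i _ => Finset.sum_congr rfl fun j _ => by ring

lemma _root_.ContinuousLinearMap.IsPositive.posSemidef_inner {ι : Type*} [Fintype ι]
    {E : Type*} [NormedAddCommGroup E] [InnerProductSpace ℂ E] [CompleteSpace E] {B : E →L[ℂ] E}
    (hB : B.IsPositive) (ξ : ι → E) :
    (Matrix.of fun i j => ⟪ξ i, B (ξ j)⟫_ℂ).PosSemidef := by
  obtain ⟨R, rfl⟩ := CStarAlgebra.nonneg_iff_eq_star_mul_self.mp ((nonneg_iff_isPositive B).mpr hB)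
  have : (Matrix.of fun i j => ⟪ξ i, (star R * R) (ξ j)⟫_ℂ) = Matrix.gram ℂ fun i => R (ξ i) := by
    ext i j
    simp [star_eq_adjoint, adjoint_inner_right]
  exact this ▸ Matrix.posSemidef_gram ℂ _

section MeasurePrepare

variable {E F : Type*} [NormedAddCommGroup E] [InnerProductSpace ℂ E] [CompleteSpace E]
  [NormedAddCommGroup F] [InnerProductSpace ℂ F] (A : StarSubalgebra ℂ (E →L[ℂ] E))

def vectorState (e : E) : A →ₗ[ℂ] ℂ where
  toFun a := ⟪e, (a : E →L[ℂ] E) e⟫_ℂ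
  map_add' _ _ := inner_add_right _ _ _
  map_smul' _ _ := inner_smul_right _ _ _

def measurePrepare (e : E) : (F →L[ℂ] F) →ₗ[ℂ] (A →ₗ[ℂ] (F →L[ℂ] F)) :=
  LinearMap.smulRightₗ (vectorState A e)

lemma measurePrepare_apply (e : E) (B : F →L[ℂ] F) (a : A) :
    measurePrepare A e B a = ⟪e, (a : E →L[ℂ] E) e⟫_ℂ • B :=
  rfl

lemma measurePrepare_apply_one {e : E} (he : ‖e‖ = 1) (B : F →L[ℂ] F) :
    measurePrepare A e B 1 = B := by
  simp [measurePrepare_apply, he]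

lemma isCPMap_measurePrepare [CompleteSpace F] (e : E) {B : F →L[ℂ] F}
    (hB : B.IsPositive) : IsCPMap A (measurePrepare A e B) := by
  intro n a ha
  rw [isPositive_iff_forall_inner_nonneg]
  intro ξ
  have hG := posSemidef_inner_matOp ha fun _ => e
  have hP := hB.posSemidef_inner fun k => ξ k
  -- `⟪ξ, matOp (ω(aₖⱼ)) ξ⟫ = ∑ₖⱼ ⟪e, aₖⱼ e⟫ ⟪ξₖ, B ξⱼ⟫`: the sum of the entries of a Schur product
  convert (hG.hadamard hP).dotProduct_mulVec_nonneg 1 using 1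
  simp [inner_matOp, measurePrepare_apply, dotProduct, Matrix.mulVec]

lemma wStarCont_measurePrepare (e : E) (B : F →L[ℂ] F) :
    WStarCont A (measurePrepare A e B) := by
  intro a a' c _ ha x y
  simp only [measurePrepare_apply, smul_apply, inner_smul_right]
  exact (ha e e).mul_const _

lemma normalCP_measurePrepare [CompleteSpace F] (e : E) {B : F →L[ℂ] F}
    (hB : B.IsPositive) : NormalCP A (measurePrepare A e B) :=
  ⟨isCPMap_measurePrepare A e hB, wStarCont_measurePrepare A e B⟩

end MeasurePrepare

section NormalCP

variable {E F : Type*} [NormedAddCommGroup E] [InnerProductSpace ℂ E] [CompleteSpace E]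
  [NormedAddCommGroup F] [InnerProductSpace ℂ F] {A : StarSubalgebra ℂ (E →L[ℂ] E)}

lemma isPositive_matOp_fin_one_iff {T : F →L[ℂ] F} :
    (matOp fun _ _ : Fin 1 => T).IsPositive ↔ T.IsPositive := by
  simp only [isPositive_iff_forall_inner_nonneg, inner_matOp, Finset.univ_unique,
    Finset.sum_singleton]
  exact ⟨fun h x => h (WithLp.toLp 2 fun _ => x), fun h ξ => h _⟩

lemma IsCPMap.isPositive_map_one {Φ : A →ₗ[ℂ] (F →L[ℂ] F)} (hΦ : IsCPMap A Φ) :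
    (Φ 1).IsPositive :=
  isPositive_matOp_fin_one_iff.mp <|
    hΦ 1 (fun _ _ => 1) (isPositive_matOp_fin_one_iff.mpr isPositive_one)

lemma NormalCP.add {Φ Ψ : A →ₗ[ℂ] (F →L[ℂ] F)} (hΦ : NormalCP A Φ) (hΨ : NormalCP A Ψ) :
    NormalCP A (Φ + Ψ) := by
  refine ⟨fun n a ha => ?_, fun a a' c hc ha x y => ?_⟩
  · simpa only [LinearMap.add_apply, matOp_add] using (hΦ.1 n a ha).add (hΨ.1 n a ha)
  · simpa only [LinearMap.add_apply, add_apply, inner_add_right] using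
      (hΦ.2 a a' c hc ha x y).add (hΨ.2 a a' c hc ha x y)

lemma NormalCP.smul {Φ : A →ₗ[ℂ] (F →L[ℂ] F)} (hΦ : NormalCP A Φ) {r : ℝ} (hr : 0 ≤ r) :
    NormalCP A ((r : ℂ) • Φ) := by
  refine ⟨fun n a ha => ?_, fun a a' c hc ha x y => ?_⟩
  · simpa only [LinearMap.smul_apply, matOp_smul] using
      (hΦ.1 n a ha).smul_of_nonneg (by exact_mod_cast hr)
  · simpa only [LinearMap.smul_apply, smul_apply, inner_smul_right] using
      (hΦ.2 a a' c hc ha x y).const_mul (r : ℂ)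

end NormalCP

section Supermap

variable {H₁ K₁ H₂ K₂ : Type*}
  [NormedAddCommGroup H₁] [InnerProductSpace ℂ H₁] [CompleteSpace H₁]
  [NormedAddCommGroup K₁] [InnerProductSpace ℂ K₁] [CompleteSpace K₁]
  [NormedAddCommGroup H₂] [InnerProductSpace ℂ H₂] [CompleteSpace H₂]
  [NormedAddCommGroup K₂] [InnerProductSpace ℂ K₂] [CompleteSpace K₂]
  {M₁ : VonNeumannAlgebra H₁} {N₁ : VonNeumannAlgebra K₁}
  {M₂ : VonNeumannAlgebra H₂} {N₂ : VonNeumannAlgebra K₂}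

def PreservesChannels (Sm : CBsp M₁ N₁ →ₗ[ℂ] CBsp M₂ N₂) : Prop :=
  ∀ Φ : CBsp M₁ N₁, IsChannel _ N₁ (Φ : M₁.toStarSubalgebra →ₗ[ℂ] (K₁ →L[ℂ] K₁)) →
    IsChannel _ N₂ (Sm Φ : M₂.toStarSubalgebra →ₗ[ℂ] (K₂ →L[ℂ] K₂))

variable (M₁) in
lemma measurePrepare_mem_CBsp (e : H₁) (B : K₁ →L[ℂ] K₁) :
    measurePrepare M₁.toStarSubalgebra e B ∈ CBsp M₁ (topVN K₁) := by
  have hspan : Submodule.span ℂ {B : K₁ →L[ℂ] K₁ | 0 ≤ B}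
      ≤ (CBsp M₁ (topVN K₁)).comap (measurePrepare M₁.toStarSubalgebra e) :=
    Submodule.span_le.mpr fun B hB => Submodule.subset_span
      ⟨normalCP_measurePrepare _ e ((nonneg_iff_isPositive B).mp hB), fun _ => mem_topVN_sa _⟩
  exact hspan ((CStarAlgebra.span_nonneg (A := K₁ →L[ℂ] K₁)).symm ▸ Submodule.mem_top)

variable (M₁) in
def measurePrepareCB (e : H₁) : (K₁ →L[ℂ] K₁) →ₗ[ℂ] CBsp M₁ (topVN K₁) :=
  LinearMap.codRestrict _ (measurePrepare M₁.toStarSubalgebra e) (measurePrepare_mem_CBsp M₁ e)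

lemma isChannel_smul_add_measurePrepare {Φ : M₁.toStarSubalgebra →ₗ[ℂ] (K₁ →L[ℂ] K₁)}
    (hΦ : NormalCP _ Φ) {e : H₁} (he : ‖e‖ = 1) {r : ℝ} (hr : 0 ≤ r) (hrΦ : r * ‖Φ 1‖ ≤ 1) :
    IsChannel _ (topVN K₁) ((r : ℂ) • Φ + measurePrepare _ e (1 - (r : ℂ) • Φ 1)) := by
  have hrΦ_pos : ((r : ℂ) • Φ 1).IsPositive :=
    hΦ.1.isPositive_map_one.smul_of_nonneg (by exact_mod_cast hr)
  have hrΦ_le : (r : ℂ) • Φ 1 ≤ 1 := by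
    refine (CStarAlgebra.norm_le_one_iff_of_nonneg _ ((nonneg_iff_isPositive _).mpr hrΦ_pos)).mp ?_
    simpa [norm_smul, abs_of_nonneg hr] using hrΦ
  refine ⟨(hΦ.smul hr).add (normalCP_measurePrepare _ e hrΦ_le), fun _ => mem_topVN_sa _, ?_⟩
  simp [measurePrepare_apply_one _ he]

lemma supermap_apply_one_eq_of_normalCP (Sm : CBsp M₁ (topVN K₁) →ₗ[ℂ] CBsp M₂ N₂)
    (hS : PreservesChannels Sm)
    {e : H₁} (he : ‖e‖ = 1) (Φ : CBsp M₁ (topVN K₁))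
    (hΦ : NormalCP _ (Φ : M₁.toStarSubalgebra →ₗ[ℂ] (K₁ →L[ℂ] K₁))) :
    (Sm Φ : M₂.toStarSubalgebra →ₗ[ℂ] (K₂ →L[ℂ] K₂)) 1
      = (Sm (measurePrepareCB M₁ e ((Φ : M₁.toStarSubalgebra →ₗ[ℂ] _) 1)) :
          M₂.toStarSubalgebra →ₗ[ℂ] (K₂ →L[ℂ] K₂)) 1 := by
  let L : CBsp M₁ (topVN K₁) →ₗ[ℂ] (K₂ →L[ℂ] K₂) :=
    LinearMap.applyₗ 1 ∘ₗ (CBsp M₂ N₂).subtype ∘ₗ Sm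
  set B := (Φ : M₁.toStarSubalgebra →ₗ[ℂ] (K₁ →L[ℂ] K₁)) 1
  have hL : ∀ r : ℝ, 0 ≤ r → r * ‖B‖ ≤ 1 →
      (r : ℂ) • (L Φ - L (measurePrepareCB M₁ e B)) + L (measurePrepareCB M₁ e 1) = 1 := by
    intro r hr hrB
    set Θ := (r : ℂ) • Φ + measurePrepareCB M₁ e (1 - (r : ℂ) • B)
    have hΘ : (Θ : M₁.toStarSubalgebra →ₗ[ℂ] (K₁ →L[ℂ] K₁))
        = (r : ℂ) • (Φ : M₁.toStarSubalgebra →ₗ[ℂ] (K₁ →L[ℂ] K₁))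
          + measurePrepare _ e (1 - (r : ℂ) • B) := rfl
    have h : L Θ = 1 := (hS Θ (hΘ ▸ isChannel_smul_add_measurePrepare hΦ he hr hrB)).2.2
    rw [← h]
    simp only [Θ, map_add, map_sub, map_smul]
    module
  have h₀ := hL 0 le_rfl (by simp)
  have h₁ := hL (‖B‖ + 1)⁻¹ (by positivity) (by
    rw [inv_mul_le_iff₀ (by positivity)]; linarith)
  rw [Complex.ofReal_zero, zero_smul, zero_add] at h₀
  rw [h₀, add_eq_right, smul_eq_zero] at h₁
  exact sub_eq_zero.mp (h₁.resolve_left (by norm_cast; positivity))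

lemma supermap_apply_one_eq_measurePrepare (Sm : CBsp M₁ (topVN K₁) →ₗ[ℂ] CBsp M₂ N₂)
    (hS : PreservesChannels Sm)
    {e : H₁} (he : ‖e‖ = 1) (Φ : CBsp M₁ (topVN K₁)) :
    (Sm Φ : M₂.toStarSubalgebra →ₗ[ℂ] (K₂ →L[ℂ] K₂)) 1
      = (Sm (measurePrepareCB M₁ e ((Φ : M₁.toStarSubalgebra →ₗ[ℂ] _) 1)) :
          M₂.toStarSubalgebra →ₗ[ℂ] (K₂ →L[ℂ] K₂)) 1 := by
  let L : CBsp M₁ (topVN K₁) →ₗ[ℂ] (K₂ →L[ℂ] K₂) :=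
    LinearMap.applyₗ 1 ∘ₗ (CBsp M₂ N₂).subtype ∘ₗ Sm
  let ev : CBsp M₁ (topVN K₁) →ₗ[ℂ] (K₁ →L[ℂ] K₁) :=
    LinearMap.applyₗ 1 ∘ₗ (CBsp M₁ (topVN K₁)).subtype
  suffices L = L ∘ₗ measurePrepareCB M₁ e ∘ₗ ev from LinearMap.congr_fun this Φ
  exact LinearMap.ext_on Submodule.span_span_coe_preimage fun Φ hΦ =>
    supermap_apply_one_eq_of_normalCP Sm hS he Φ hΦ.1

theorem supermap_apply_one_eq_of_apply_one_eq (Sm : CBsp M₁ (topVN K₁) →ₗ[ℂ] CBsp M₂ N₂)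
    (hS : PreservesChannels Sm)
    {X Y : CBsp M₁ (topVN K₁)}
    (hXY : (X : M₁.toStarSubalgebra →ₗ[ℂ] (K₁ →L[ℂ] K₁)) 1
      = (Y : M₁.toStarSubalgebra →ₗ[ℂ] (K₁ →L[ℂ] K₁)) 1) :
    (Sm X : M₂.toStarSubalgebra →ₗ[ℂ] (K₂ →L[ℂ] K₂)) 1
      = (Sm Y : M₂.toStarSubalgebra →ₗ[ℂ] (K₂ →L[ℂ] K₂)) 1 := by
  obtain hH₁ | hH₁ := subsingleton_or_nontrivial H₁
  · rw [Subsingleton.elim X Y]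
  · obtain ⟨e, he⟩ := exists_norm_eq H₁ zero_le_one
    rw [supermap_apply_one_eq_measurePrepare Sm hS he X,
      supermap_apply_one_eq_measurePrepare Sm hS he Y, hXY]

end Supermap

theorem statement10_general {H K : Type*} [NormedAddCommGroup H] [InnerProductSpace ℂ H] [CompleteSpace H] [NormedAddCommGroup K] [InnerProductSpace ℂ K] [CompleteSpace K]
    (M : VonNeumannAlgebra H) (N : VonNeumannAlgebra K)
    (Sm : CBsp M (topVN H) →ₗ[ℂ] CBsp N (topVN K)) (hS : IsDetSupermap Sm)
    (E F A : H →L[ℂ] H) (X Y : CBsp M (topVN H))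
    (hX : (X : M.toStarSubalgebra →ₗ[ℂ] (H →L[ℂ] H))
        = sandwichMap M.toStarSubalgebra E (A ∘L F))
    (hY : (Y : M.toStarSubalgebra →ₗ[ℂ] (H →L[ℂ] H))
        = sandwichMap M.toStarSubalgebra (E ∘L A) F) :
    (Sm X : N.toStarSubalgebra →ₗ[ℂ] (K →L[ℂ] K)) 1
      = (Sm Y : N.toStarSubalgebra →ₗ[ℂ] (K →L[ℂ] K)) 1 :=
  supermap_apply_one_eq_of_apply_one_eq Sm hS.2 <| by
    rw [hX, hY]
    exact (comp_assoc E A F).symm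

/-- If `S` is a deterministic quantum supermap from `CB(M,B(H))` to
`CB(N,B(K))`, then for all operators `E, F, A ∈ B(H)`,
`[S(E ⊙ AF)](I_N) = [S(EA ⊙ F)](I_N)`. -/
theorem statement10 {H K : Type*} [NormedAddCommGroup H] [InnerProductSpace ℂ H] [CompleteSpace H] [TopologicalSpace.SeparableSpace H] [NormedAddCommGroup K] [InnerProductSpace ℂ K] [CompleteSpace K] [TopologicalSpace.SeparableSpace K]
    (M : VonNeumannAlgebra H) (N : VonNeumannAlgebra K)
    (Sm : CBsp M (topVN H) →ₗ[ℂ] CBsp N (topVN K)) (hS : IsDetSupermap Sm)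
    (E F A : H →L[ℂ] H) (X Y : CBsp M (topVN H))
    (hX : (X : M.toStarSubalgebra →ₗ[ℂ] (H →L[ℂ] H))
        = sandwichMap M.toStarSubalgebra E (A ∘L F))
    (hY : (Y : M.toStarSubalgebra →ₗ[ℂ] (H →L[ℂ] H))
        = sandwichMap M.toStarSubalgebra (E ∘L A) F) :
    (Sm X : N.toStarSubalgebra →ₗ[ℂ] (K →L[ℂ] K)) 1
      = (Sm Y : N.toStarSubalgebra →ₗ[ℂ] (K →L[ℂ] K)) 1 :=
  statement10_general M N Sm hS E F A X Y hX hY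

end QSM
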